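/- arXiv:2105.06104 — 3 statements merged into one kernel-verified Lean document; each statement's English description precedes it below -/
import Mathlib

section
/- For the mean-field two-group Lanchester dynamics Ṙ₁ = -κ_B·k₁·B·(n/L), Ṙ₂ = -κ_B·k₂·B·(n/L), Ḃ = -κ_R·(L₁/n)·(R₁/k₁) - κ_R·(L₂/n)·(R₂/k₂) with L₁ = n₁k₁, L₂ = n₂k₂, L = L₁+L₂, the quantity -κ_R·(L/n²)·((n₁/k₁)·R₁² + (n₂/k₂)·R₂²) + κ_B·B² is constant in time. -/
/-!
With `aᵢ = κ_B kᵢ n / L` and `cᵢ = κ_R nᵢ L / (κ_B kᵢ n²)` the dynamics take the square-law form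
`Rᵢ' = -aᵢ B`, `B' = -∑ cᵢ aᵢ Rᵢ`. Then `(∑ cᵢ Rᵢ²)' = -2 B ∑ cᵢ aᵢ Rᵢ = (B²)'`, so
`∑ cᵢ Rᵢ² - B²` is constant, and the stated quantity is `-κ_B` times it.
-/

open Finset

theorem lanchester_sum_sq_sub_sq_const {ι : Type*} (s : Finset ι) (a c : ι → ℝ)
    (x : ι → ℝ → ℝ) (y : ℝ → ℝ)
    (hx : ∀ i ∈ s, ∀ t, HasDerivAt (x i) (-(a i * y t)) t)
    (hy : ∀ t, HasDerivAt y (-∑ i ∈ s, c i * a i * x i t) t) (t : ℝ) :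
    ∑ i ∈ s, c i * x i t ^ 2 - y t ^ 2 = ∑ i ∈ s, c i * x i 0 ^ 2 - y 0 ^ 2 := by
  let E : ℝ → ℝ := fun t ↦ ∑ i ∈ s, c i * x i t ^ 2 - y t ^ 2
  have hE : ∀ t, HasDerivAt E 0 t := by
    intro t
    have h := (HasDerivAt.fun_sum fun i hi ↦ ((hx i hi t).pow 2).const_mul (c i)).sub
      ((hy t).pow 2)
    refine h.congr_deriv ?_
    simp only [Nat.cast_ofNat, Nat.add_one_sub_one, pow_one, mul_neg, mul_sum]
    rw [← sum_neg_distrib, ← sum_sub_distrib]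
    exact sum_eq_zero fun i _ ↦ by ring
  exact is_const_of_deriv_eq_zero (fun t ↦ (hE t).differentiableAt) (fun t ↦ (hE t).deriv) t 0

theorem meanfield_two_group_invariant_general
    (κB κR n n₁ n₂ k₁ k₂ : ℝ)
    (hκB : 0 < κB) (hn : 0 < n)
    (hn₁ : 0 < n₁) (hn₂ : 0 < n₂) (hk₁ : 0 < k₁) (hk₂ : 0 < k₂)
    (R₁ R₂ B : ℝ → ℝ)
    (hR₁ : ∀ t, HasDerivAt R₁ (-(κB * k₁ * B t * (n / (n₁ * k₁ + n₂ * k₂)))) t)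
    (hR₂ : ∀ t, HasDerivAt R₂ (-(κB * k₂ * B t * (n / (n₁ * k₁ + n₂ * k₂)))) t)
    (hB : ∀ t, HasDerivAt B
      (-(κR * ((n₁ * k₁) / n) * (R₁ t / k₁)) - κR * ((n₂ * k₂) / n) * (R₂ t / k₂)) t) :
    ∀ t,
      -(κR * ((n₁ * k₁ + n₂ * k₂) / n^2) * ((n₁ / k₁) * (R₁ t)^2 + (n₂ / k₂) * (R₂ t)^2))
        + κB * (B t)^2
      = -(κR * ((n₁ * k₁ + n₂ * k₂) / n^2) * ((n₁ / k₁) * (R₁ 0)^2 + (n₂ / k₂) * (R₂ 0)^2))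
        + κB * (B 0)^2 := by
  intro t
  set L := n₁ * k₁ + n₂ * k₂
  have hL : 0 < L := by positivity
  let a : Fin 2 → ℝ := ![κB * k₁ * n / L, κB * k₂ * n / L]
  let c : Fin 2 → ℝ := ![κR * n₁ * L / (κB * k₁ * n ^ 2), κR * n₂ * L / (κB * k₂ * n ^ 2)]
  have key := lanchester_sum_sq_sub_sq_const univ a c ![R₁, R₂] B ?_ ?_ t
  · simp only [Fin.sum_univ_two, Fin.isValue, Matrix.cons_val_zero, Matrix.cons_val_one,
      Matrix.cons_val_fin_one, c] at key
    linear_combination (norm := (field_simp; ring)) (-κB) * key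
  · intro i _ t
    fin_cases i
    · simpa [a, mul_div_assoc, mul_right_comm _ (B t)] using hR₁ t
    · simpa [a, mul_div_assoc, mul_right_comm _ (B t)] using hR₂ t
  · intro t
    convert hB t using 1
    simp only [Fin.sum_univ_two, Fin.isValue, Matrix.cons_val_zero, Matrix.cons_val_one,
      Matrix.cons_val_fin_one, a, c]
    field_simp
    ring

theorem meanfield_two_group_invariant
    (κB κR n n₁ n₂ k₁ k₂ : ℝ)
    (hκB : 0 < κB) (hκR : 0 < κR) (hn : 0 < n)
    (hn₁ : 0 < n₁) (hn₂ : 0 < n₂) (hk₁ : 0 < k₁) (hk₂ : 0 < k₂)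
    (hsum : n₁ + n₂ = n)
    (R₁ R₂ B : ℝ → ℝ)
    (hR₁ : ∀ t, HasDerivAt R₁ (-(κB * k₁ * B t * (n / (n₁ * k₁ + n₂ * k₂)))) t)
    (hR₂ : ∀ t, HasDerivAt R₂ (-(κB * k₂ * B t * (n / (n₁ * k₁ + n₂ * k₂)))) t)
    (hB : ∀ t, HasDerivAt B
      (-(κR * ((n₁ * k₁) / n) * (R₁ t / k₁)) - κR * ((n₂ * k₂) / n) * (R₂ t / k₂)) t) :
    ∀ t,
      -(κR * ((n₁ * k₁ + n₂ * k₂) / n^2) * ((n₁ / k₁) * (R₁ t)^2 + (n₂ / k₂) * (R₂ t)^2))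
        + κB * (B t)^2
      = -(κR * ((n₁ * k₁ + n₂ * k₂) / n^2) * ((n₁ / k₁) * (R₁ 0)^2 + (n₂ / k₂) * (R₂ 0)^2))
        + κB * (B 0)^2 :=
  meanfield_two_group_invariant_general κB κR n n₁ n₂ k₁ k₂ hκB hn hn₁ hn₂ hk₁ hk₂ R₁ R₂ B hR₁ hR₂
    hB
end

section
/- The function f(k₁,k₂,n₁) = ((n₁k₁ + (n-n₁)k₂)/n²)·(n₁/k₁ + (n-n₁)/k₂), defined for 1 ≤ k₁,k₂ ≤ n and 0 ≤ n₁ ≤ n with n ≥ 1, attains its maximum value at n₁ = n/2, k₁ = 1, k₂ = n, where the maximum value is 1/2 + n/4 + 1/(4n). -/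
theorem sacrificial_config_maximizes
    (n : ℝ) (hn : 1 ≤ n)
    (f : ℝ → ℝ → ℝ → ℝ)
    (hf : ∀ k₁ k₂ n₁, f k₁ k₂ n₁ =
      ((n₁ * k₁ + (n - n₁) * k₂) / n^2) * (n₁ / k₁ + (n - n₁) / k₂)) :
    (∀ k₁ k₂ n₁, 1 ≤ k₁ → k₁ ≤ n → 1 ≤ k₂ → k₂ ≤ n → 0 ≤ n₁ → n₁ ≤ n →
      f k₁ k₂ n₁ ≤ f 1 n (n / 2)) ∧
    f 1 n (n / 2) = 1/2 + n/4 + 1/(4*n) := by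
  have hn0 : (0:ℝ) < n := lt_of_lt_of_le one_pos hn
  have hmax : f 1 n (n / 2) = 1/2 + n/4 + 1/(4*n) := by
    rw [hf]
    field_simp
    ring
  refine ⟨?_, hmax⟩
  intro k₁ k₂ n₁ h1 h2 h3 h4 h5 h6
  rw [hf, hmax]
  have hk₁ : (0:ℝ) < k₁ := lt_of_lt_of_le one_pos h1
  have hk₂ : (0:ℝ) < k₂ := lt_of_lt_of_le one_pos h3
  rw [div_add_div _ _ (ne_of_gt hk₁) (ne_of_gt hk₂), div_mul_div_comm]
  rw [div_le_iff₀ (by positivity)]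
  have key : (n * k₁ - k₂) * (n * k₂ - k₁) ≥ 0 := by
    apply mul_nonneg <;> nlinarith
  have hab : 0 ≤ n₁ * (n - n₁) := mul_nonneg h5 (by linarith)
  have hsq : (2 * n₁ - n)^2 ≥ 0 := sq_nonneg _
  have h14 : 1/2 + n/4 + 1/(4*n) = (n+1)^2 / (4*n) := by
    field_simp; ring
  rw [h14, div_mul_eq_mul_div, le_div_iff₀ (by positivity)]
  nlinarith [mul_nonneg hab key, mul_pos hk₁ hk₂,
    mul_nonneg (mul_nonneg hsq (sq_nonneg (n-1))) (mul_pos hk₁ hk₂).le]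
end

section
/- In the directed-fire Lanchester model with κ_B·B₀² > κ_R·R₀², the Red force reaches zero at the finite time t* = (1/√(κ_Bκ_R))·artanh(√(κ_Bκ_R)·R₀/(κ_B·B₀)), i.e., R(t*) = 0 for the explicit hyperbolic solution. -/
/-- The inverse hyperbolic tangent, `artanh y = (1/2) log ((1+y)/(1-y))`. -/
noncomputable def artanh (y : ℝ) : ℝ := (1 / 2) * Real.log ((1 + y) / (1 - y))

/-!
The hyperbolic solution is `R₀ cosh (c t) - K sinh (c t)` with `K = B₀ √(κB/κR)`, so it vanishes
where `tanh (c t) = R₀ / K`. The hypothesis `κB B₀² > κR R₀²` says exactly that `R₀ < K`, so this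
happens at `t* = artanh (R₀ / K) / c > 0`; and `√(κB/κR) · √(κB κR) = κB` identifies `R₀ / K`
with `c R₀ / (κB B₀)`.
-/

theorem artanh_eq_real_artanh {y : ℝ} (hy : y ∈ Set.Icc (-1) 1) : artanh y = Real.artanh y :=
  (Real.artanh_eq_half_log hy).symm

theorem mul_cosh_artanh_div_sub_mul_sinh {a b : ℝ} (ha : 0 < a) (hab : a < b) :
    a * Real.cosh (Real.artanh (a / b)) - b * Real.sinh (Real.artanh (a / b)) = 0 := by
  have hb : 0 < b := ha.trans hab
  have htanh := Real.tanh_artanh ⟨by linarith [div_pos ha hb], (div_lt_one hb).2 hab⟩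
  rw [Real.tanh_eq_sinh_div_cosh, div_eq_div_iff (Real.cosh_pos _).ne' hb.ne'] at htanh
  linear_combination -htanh

theorem sqrt_div_mul_sqrt_mul {x y : ℝ} (hx : 0 ≤ x) (hy : 0 < y) :
    √(x / y) * √(x * y) = x := by
  rw [← Real.sqrt_mul (div_nonneg hx hy.le), show x / y * (x * y) = x * x by field_simp,
    Real.sqrt_mul_self hx]

theorem lanchester_red_annihilation_time
    (κB κR B₀ R₀ : ℝ) (hκB : 0 < κB) (hκR : 0 < κR)
    (hB₀ : 0 < B₀) (hR₀ : 0 < R₀)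
    (hdom : κB * B₀^2 > κR * R₀^2) :
    let c := Real.sqrt (κB * κR)
    let R := fun t : ℝ => R₀ * Real.cosh (c * t) - B₀ * Real.sqrt (κB / κR) * Real.sinh (c * t)
    let tstar := (1 / c) * artanh (c * R₀ / (κB * B₀))
    0 < tstar ∧ R tstar = 0 := by
  intro c R tstar
  have hc : 0 < c := Real.sqrt_pos.2 (mul_pos hκB hκR)
  set K := B₀ * √(κB / κR)
  have hK : 0 < K := mul_pos hB₀ (Real.sqrt_pos.2 (div_pos hκB hκR))
  have hR₀K : R₀ < K := by
    refine lt_of_pow_lt_pow_left₀ 2 hK.le ?_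
    rw [mul_pow, Real.sq_sqrt (div_pos hκB hκR).le, ← mul_div_assoc, lt_div_iff₀ hκR]
    linarith
  have hcK : c * K = κB * B₀ := by
    calc c * K = √(κB / κR) * √(κB * κR) * B₀ := by simp only [c, K]; ring
      _ = κB * B₀ := by rw [sqrt_div_mul_sqrt_mul hκB.le hκR]
  have hratio : c * R₀ / (κB * B₀) = R₀ / K := by
    rw [← hcK]
    field_simp
  have hratio_mem : R₀ / K ∈ Set.Ioo 0 1 := ⟨div_pos hR₀ hK, (div_lt_one hK).2 hR₀K⟩
  have hctstar : c * tstar = Real.artanh (R₀ / K) := by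
    rw [← artanh_eq_real_artanh ⟨by linarith [hratio_mem.1], hratio_mem.2.le⟩, ← hratio,
      ← mul_assoc, mul_one_div_cancel hc.ne', one_mul]
  refine ⟨?_, ?_⟩
  · rw [← mul_pos_iff_of_pos_left hc, hctstar]
    exact Real.artanh_pos hratio_mem
  · simp only [R, hctstar]
    exact mul_cosh_artanh_div_sub_mul_sinh hR₀ hR₀K
end
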